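/- Let L be a 1-homogeneous tree language and α a symbol in Σ. Then α⁻¹(L^⊛) = (L^⊛ ∘ α⁻¹(L)) ∘ (ε₁, Inc_ε(1, L^⊛)) if α ∈ Σ₀, and α⁻¹(L^⊛) = L^⊛ ∘ α⁻¹(L) if α has arity ≥ 1. -/

import Mathlib

inductive GTree (S : Type) (ar : S → ℕ) : Type where
  | eps (x : ℕ) : GTree S ar
  | node (f : S) (ts : Fin (ar f) → GTree S ar) : GTree S ar

namespace GTree

variable {S : Type} {ar : S → ℕ}

/-- Substitute each ε-symbol `ε_x` by `σ x`. -/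
def subst (σ : ℕ → GTree S ar) : GTree S ar → GTree S ar
  | eps x => σ x
  | node f ts => node f (fun i => subst σ (ts i))

/-- The multiset of ε-indices of a tree. -/
def epsIdx : GTree S ar → Multiset ℕ
  | eps x => {x}
  | node _ ts => ∑ i, epsIdx (ts i)

/-- `Inc_ε(z,t)`: increment every ε-index by `z`. -/
def inc (z : ℕ) (t : GTree S ar) : GTree S ar :=
  subst (fun x => eps (x + z)) t

/-- Composition `t ∘ (t₁,…,t_k)`: graft `ts_j` at the `j`-th smallest ε-index of `t`. -/
def compo (t : GTree S ar) (ts : List (GTree S ar)) : GTree S ar :=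
  subst (fun x => ts.getD ((Multiset.sort (epsIdx t) (· ≤ ·)).idxOf x) (eps x)) t

/-- The tree `α(ε₁,…,ε_k)` associated with a symbol `α`. -/
def symTree (f : S) : GTree S ar := node f (fun i => eps (i.1 + 1))

/-- Bottom-up quotient `d⁻¹(t)` of a tree `t` w.r.t. a tree `d`. -/
def quotT (d t : GTree S ar) : Set (GTree S ar) :=
  { u | epsIdx u = 1 ::ₘ (epsIdx t - epsIdx d).map (· + 1) ∧
        subst (fun j => if j = 1 then d else eps (j - 1)) u = t }

/-- Bottom-up quotient `d⁻¹(L)` of a language w.r.t. a tree. -/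
def quotL (d : GTree S ar) (L : Set (GTree S ar)) : Set (GTree S ar) :=
  ⋃ t ∈ L, quotT d t

def incL (z : ℕ) (L : Set (GTree S ar)) : Set (GTree S ar) := inc z '' L

/-- Composition of languages `L ∘ (L₁,…,L_k)`. -/
def compoL (L : Set (GTree S ar)) (Ls : List (Set (GTree S ar))) : Set (GTree S ar) :=
  { u | ∃ t ∈ L, ∃ ts : List (GTree S ar), List.Forall₂ (· ∈ ·) ts Ls ∧ u = compo t ts }

/-- Partial composition `t ∘₁ L'` at the first (smallest) ε-index. -/
def pcomp (t : GTree S ar) (L' : Set (GTree S ar)) : Set (GTree S ar) :=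
  { u | ∃ t' ∈ L', u = compo t (t' :: ((Multiset.sort (epsIdx t) (· ≤ ·)).tail).map eps) }

/-- Partial composition of languages `L ∘₁ L'`. -/
def pcompL (L L' : Set (GTree S ar)) : Set (GTree S ar) := ⋃ t ∈ L, pcomp t L'

/-- Tree substitution `t_{b ← L}` of the 0-ary symbol `b` by the language `L`. -/
def bsub [DecidableEq S] (b : S) (L : Set (GTree S ar)) : GTree S ar → Set (GTree S ar)
  | eps x => {eps x}
  | node f ts =>
      if f = b then L
      else { u | ∃ us : Fin (ar f) → GTree S ar, (∀ i, us i ∈ bsub b L (ts i)) ∧ u = node f us }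

/-- `b`-product `L₁ ·_b L₂`. -/
def prodB [DecidableEq S] (L₁ : Set (GTree S ar)) (b : S) (L₂ : Set (GTree S ar)) :
    Set (GTree S ar) :=
  ⋃ t ∈ L₁, bsub b L₂ t

/-- Iterated `b`-product `L^{n_b}`. -/
def iterB [DecidableEq S] (b : S) (L : Set (GTree S ar)) : ℕ → Set (GTree S ar)
  | 0 => {symTree b}
  | n + 1 => iterB b L n ∪ prodB L b (iterB b L n)

/-- `b`-closure `L^{*_b}`. -/
def closB [DecidableEq S] (b : S) (L : Set (GTree S ar)) : Set (GTree S ar) :=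
  ⋃ n, iterB b L n

/-- Iterated composition `L^{n∘}` of a 1-homogeneous language of ε-index `{x}`. -/
def iterC (x : ℕ) (L : Set (GTree S ar)) : ℕ → Set (GTree S ar)
  | 0 => {eps x}
  | n + 1 => iterC x L n ∪ pcompL (iterC x L n) L

/-- Composition closure `L^⊛`. -/
def closC (x : ℕ) (L : Set (GTree S ar)) : Set (GTree S ar) := ⋃ n, iterC x L n

end GTree

namespace GTree

variable {S : Type} {ar : S → ℕ}

def bindHom (g : ℕ → Multiset ℕ) : Multiset ℕ →+ Multiset ℕ where
  toFun m := m.bind g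
  map_zero' := Multiset.zero_bind g
  map_add' a b := Multiset.add_bind a b g

theorem subst_subst (σ τ : ℕ → GTree S ar) (t : GTree S ar) :
    subst τ (subst σ t) = subst (fun j => subst τ (σ j)) t := by
  induction t with
  | eps x => rfl
  | node f ts ih => simpa [subst] using funext ih

theorem subst_congr {σ σ' : ℕ → GTree S ar} {t : GTree S ar}
    (h : ∀ j ∈ epsIdx t, σ j = σ' j) : subst σ t = subst σ' t := by
  induction t with
  | eps x => exact h x (by simp [epsIdx])
  | node f ts ih =>
      simp only [subst, node.injEq, heq_eq_eq, true_and]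
      exact funext fun i => ih i (fun j hj => h j (by
        simp only [epsIdx, Multiset.mem_sum]
        exact ⟨i, Finset.mem_univ i, hj⟩))

theorem subst_eps (t : GTree S ar) : subst eps t = t := by
  induction t with
  | eps x => rfl
  | node f ts ih => simpa [subst] using funext ih

theorem epsIdx_subst (σ : ℕ → GTree S ar) (t : GTree S ar) :
    epsIdx (subst σ t) = (epsIdx t).bind (fun j => epsIdx (σ j)) := by
  induction t with
  | eps x => simp [subst, epsIdx]
  | node f ts ih =>
      simp only [subst, epsIdx, ih]
      exact (map_sum (bindHom (fun j => epsIdx (σ j))) _ _).symm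

/-- substitution at a single index. -/
def sOne (x : ℕ) (a : GTree S ar) (t : GTree S ar) : GTree S ar :=
  subst (fun j => if j = x then a else eps j) t

/-- the quotient-inverse substitution function. -/
def phiF (α : S) : ℕ → GTree S ar := fun j => if j = 1 then symTree α else eps (j - 1)

theorem epsIdx_inc (z : ℕ) (t : GTree S ar) :
    epsIdx (inc z t) = (epsIdx t).map (· + z) := by
  rw [inc, epsIdx_subst, ← Multiset.bind_singleton]
  rfl

theorem subst_of_epsIdx_zero {t : GTree S ar} (h : epsIdx t = 0) (σ : ℕ → GTree S ar) :
    subst σ t = t := by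
  rw [subst_congr (σ' := eps) (fun j hj => by simp [h] at hj), subst_eps]

theorem epsIdx_sOne {x : ℕ} {t : GTree S ar} (h : epsIdx t = {x}) (a : GTree S ar) :
    epsIdx (sOne x a t) = epsIdx a := by
  rw [sOne, epsIdx_subst, h, Multiset.singleton_bind, if_pos rfl]

theorem sort_singleton' (x : ℕ) : Multiset.sort ({x} : Multiset ℕ) (· ≤ ·) = [x] :=
  Multiset.sort_singleton x _

theorem sort_pair {x : ℕ} (hx : 1 ≤ x) :
    Multiset.sort ({1, x + 1} : Multiset ℕ) (· ≤ ·) = [1, x + 1] := by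
  refine List.Perm.eq_of_pairwise' (l₂ := [1, x+1]) (Multiset.pairwise_sort _ _) ?_ ?_
  · constructor
    · intro b hb; simp at hb; omega
    · simp
  · rw [← Multiset.coe_eq_coe, Multiset.sort_eq]
    rfl

theorem compo_single {x : ℕ} {t : GTree S ar} (h : epsIdx t = {x}) (a : GTree S ar) :
    compo t [a] = sOne x a t := by
  rw [compo, sOne, h, sort_singleton']
  apply subst_congr
  intro j hj
  rw [h, Multiset.mem_singleton] at hj
  subst hj
  simp

theorem compo_pair {x : ℕ} {t : GTree S ar} (hx : 1 ≤ x) (h : epsIdx t = {1, x + 1})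
    (a b : GTree S ar) :
    compo t [a, b] = subst (fun j => if j = 1 then a else if j = x + 1 then b else eps j) t := by
  rw [compo, h, sort_pair hx]
  apply subst_congr
  intro j hj
  rw [h] at hj
  rcases (by simpa using hj : j = 1 ∨ j = x + 1) with rfl | rfl
  · simp
  · have hx0 : x ≠ 0 := by omega
    have : x + 1 ≠ 1 := by omega
    simp [List.idxOf_cons, this, hx0]

theorem mem_pcomp_iff {x : ℕ} {t : GTree S ar} (h : epsIdx t = {x}) {L' : Set (GTree S ar)}
    {u : GTree S ar} : u ∈ pcomp t L' ↔ ∃ t' ∈ L', u = sOne x t' t := by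
  unfold pcomp
  rw [h, sort_singleton']
  simp only [List.tail_cons, List.map_nil, Set.mem_setOf_eq]
  constructor
  · rintro ⟨t', ht', rfl⟩; exact ⟨t', ht', (compo_single h t')⟩
  · rintro ⟨t', ht', rfl⟩; exact ⟨t', ht', (compo_single h t').symm⟩

theorem iterC_subset_closC (x : ℕ) (L : Set (GTree S ar)) (n : ℕ) :
    iterC x L n ⊆ closC x L := Set.subset_iUnion (iterC x L) n

theorem epsIdx_of_mem_iterC {x : ℕ} {L : Set (GTree S ar)}
    (hL : ∀ t ∈ L, epsIdx t = {x}) :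
    ∀ n, ∀ t ∈ iterC x L n, epsIdx t = {x} := by
  intro n
  induction n with
  | zero => rintro t ht; rw [Set.mem_singleton_iff.mp ht]; rfl
  | succ n ih =>
      rintro t (ht | ht)
      · exact ih t ht
      · rcases Set.mem_iUnion₂.mp ht with ⟨s, hs, hts⟩
        rcases (mem_pcomp_iff (ih s hs)).mp hts with ⟨t', ht', rfl⟩
        rw [epsIdx_sOne (ih s hs)]
        exact hL t' ht'

theorem epsIdx_of_mem_closC {x : ℕ} {L : Set (GTree S ar)}
    (hL : ∀ t ∈ L, epsIdx t = {x}) {t : GTree S ar} (ht : t ∈ closC x L) :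
    epsIdx t = {x} := by
  rcases Set.mem_iUnion.mp ht with ⟨n, hn⟩
  exact epsIdx_of_mem_iterC hL n t hn

theorem eps_mem_closC (x : ℕ) (L : Set (GTree S ar)) : eps x ∈ closC x L :=
  Set.mem_iUnion.mpr ⟨0, rfl⟩

theorem sOne_mem_closC {x : ℕ} {L : Set (GTree S ar)} (hL : ∀ t ∈ L, epsIdx t = {x})
    {t r : GTree S ar} (ht : t ∈ closC x L) (hr : r ∈ L) : sOne x r t ∈ closC x L := by
  rcases Set.mem_iUnion.mp ht with ⟨n, hn⟩
  refine Set.mem_iUnion.mpr ⟨n + 1, Or.inr ?_⟩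
  exact Set.mem_iUnion₂.mpr ⟨t, hn,
    (mem_pcomp_iff (epsIdx_of_mem_iterC hL n t hn)).mpr ⟨r, hr, rfl⟩⟩

theorem phi_inc {α : S} {v : GTree S ar} (hv : 0 ∉ epsIdx v) :
    subst (phiF α) (inc 1 v) = v := by
  rw [inc, subst_subst]
  have h : ∀ j ∈ epsIdx v, subst (phiF α) ((eps (j + 1) : GTree S ar)) = eps j := by
    intro j hj
    have hj0 : j ≠ 0 := fun h => hv (h ▸ hj)
    show phiF α (j + 1) = eps j
    rw [phiF]
    rw [if_neg (by omega)]
    simp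
  exact (subst_congr h).trans (subst_eps v)

theorem inc_sOne (x : ℕ) (r v : GTree S ar) :
    inc 1 (sOne x r v) = sOne (x + 1) (inc 1 r) (inc 1 v) := by
  unfold inc sOne
  rw [subst_subst, subst_subst]
  apply subst_congr
  intro j _
  by_cases hj : j = x
  · subst hj; simp [subst, inc]
  · have : j + 1 ≠ x + 1 := by omega
    simp [subst, hj, this]

theorem eq_inc_of_phi {α : S} {w v : GTree S ar} (h : subst (phiF α) w = v)
    (h1 : 1 ∉ epsIdx w) (h0 : 0 ∉ epsIdx w) : w = inc 1 v := by
  induction w generalizing v with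
  | eps j =>
      have hj1 : j ≠ 1 := fun hh => h1 (by simp [epsIdx, hh])
      have hj0 : j ≠ 0 := fun hh => h0 (by simp [epsIdx, hh])
      rw [subst, phiF] at h
      rw [if_neg hj1] at h
      subst h
      simp only [inc, subst]
      congr 1
      omega
  | node f ws ih =>
      rw [subst] at h
      cases v with
      | eps y => exact absurd h (by intro hh; cases hh)
      | node g vs =>
          injection h with hf hc
          subst hf
          have hc' := eq_of_heq hc
          simp only [inc, subst, node.injEq, heq_eq_eq, true_and]
          refine funext fun i => ih i (congrFun hc' i) (fun hm => h1 ?_) (fun hm => h0 ?_)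
          · simp only [epsIdx, Multiset.mem_sum]
            exact ⟨i, Finset.mem_univ i, hm⟩
          · simp only [epsIdx, Multiset.mem_sum]
            exact ⟨i, Finset.mem_univ i, hm⟩

theorem eq_of_phi_of_epsIdx_zero {α : S} {w v : GTree S ar} (h : subst (phiF α) w = v)
    (hz : epsIdx w = 0) : w = v := by
  rw [← h, subst_of_epsIdx_zero hz]

def cardHom' : Multiset ℕ →+ ℕ where
  toFun := Multiset.card
  map_zero' := rfl
  map_add' := Multiset.card_add

theorem epsIdx_symTree (α : S) :
    epsIdx (symTree α : GTree S ar) = ∑ i ∈ Finset.range (ar α), ({i + 1} : Multiset ℕ) := by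
  show ∑ i : Fin (ar α), ({(i : ℕ) + 1} : Multiset ℕ) = _
  exact Fin.sum_univ_eq_sum_range (fun i => ({i + 1} : Multiset ℕ)) (ar α)

theorem epsIdx_symTree_zero {α : S} (hα : ar α = 0) :
    epsIdx (symTree α : GTree S ar) = 0 := by
  rw [epsIdx_symTree, hα, Finset.range_zero, Finset.sum_empty]

theorem epsIdx_symTree_one {α : S} (hα : ar α = 1) :
    epsIdx (symTree α : GTree S ar) = {1} := by
  rw [epsIdx_symTree, hα, Finset.sum_range_one]

theorem card_epsIdx_symTree (α : S) :
    Multiset.card (epsIdx (symTree α : GTree S ar)) = ar α := by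
  rw [epsIdx_symTree]
  have := map_sum cardHom' (fun i => ({i + 1} : Multiset ℕ)) (Finset.range (ar α))
  simpa [cardHom'] using this

theorem epsIdx_phi (α : S) (u : GTree S ar) :
    epsIdx (subst (phiF α) u) =
      (epsIdx u).bind (fun j => if j = 1 then epsIdx (symTree α : GTree S ar) else {j - 1}) := by
  rw [epsIdx_subst]
  apply Multiset.bind_congr
  intro j _
  by_cases hj : j = 1 <;> simp [phiF, hj, epsIdx]

theorem sOne_of_not_mem {y : ℕ} {t : GTree S ar} (h : y ∉ epsIdx t) (a : GTree S ar) :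
    sOne y a t = t := by
  unfold sOne
  rw [subst_congr (σ' := eps) (fun j hj => by
    rw [if_neg (by rintro rfl; exact h hj)]), subst_eps]

theorem sOne_eps (y : ℕ) (t : GTree S ar) : sOne y (eps y) t = t := by
  unfold sOne
  rw [subst_congr (σ' := eps) (fun j hj => by by_cases hj' : j = y <;> simp [hj']), subst_eps]

theorem phi_all_one {α : S} (hα : ar α = 0) {w : GTree S ar}
    (h : epsIdx (subst (phiF α) w) = 0) : ∀ j ∈ epsIdx w, j = 1 := by
  intro j hj
  by_contra hj1
  have : (j - 1) ∈ epsIdx (subst (phiF α) w) := by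
    rw [epsIdx_phi]
    exact Multiset.mem_bind.mpr ⟨j, hj, by rw [if_neg hj1]; simp⟩
  rw [h] at this
  exact Multiset.notMem_zero _ this

theorem epsIdx_eq_zero_of_all_one {w : GTree S ar} (h : ∀ j ∈ epsIdx w, j = 1)
    (h1 : 1 ∉ epsIdx w) : epsIdx w = 0 :=
  Multiset.eq_zero_of_forall_notMem (fun j hj => h1 (h j hj ▸ hj))

/-- key computation: if `u ∈ quotT (symTree α) t` and `epsIdx t = {x}` then
    `{x} = D + ({x} - D)`. -/
theorem quot_idx_eq {α : S} {x : ℕ} (hx : 1 ≤ x) {t u : GTree S ar}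
    (ht : epsIdx t = {x}) (hu : u ∈ quotT (symTree α) t) :
    ({x} : Multiset ℕ) = epsIdx (symTree α : GTree S ar) +
      (({x} : Multiset ℕ) - epsIdx (symTree α : GTree S ar)) := by
  obtain ⟨hu1, hu2⟩ := hu
  have h := epsIdx_phi α u
  have hu2' : subst (phiF α) u = t := hu2
  rw [hu2', ht] at h
  rw [ht] at hu1
  rw [hu1, Multiset.cons_bind, if_pos rfl] at h
  have hrest : ((({x} : Multiset ℕ) - epsIdx (symTree α : GTree S ar)).map (· + 1)).bind
      (fun j => if j = 1 then epsIdx (symTree α : GTree S ar) else {j - 1}) =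
      ({x} : Multiset ℕ) - epsIdx (symTree α : GTree S ar) := by
    rw [Multiset.bind_map]
    have : ∀ j ∈ (({x} : Multiset ℕ) - epsIdx (symTree α : GTree S ar)),
        (if j + 1 = 1 then epsIdx (symTree α : GTree S ar) else ({j + 1 - 1} : Multiset ℕ))
          = {j} := by
      intro j hj
      have hjx : j = x := by
        have := Multiset.mem_of_le (tsub_le_self) hj
        simpa using this
      rw [if_neg (by omega)]
      simp
    rw [Multiset.bind_congr this, Multiset.bind_singleton, Multiset.map_id']
  rw [hrest] at h
  exact h

theorem quotT_eps_empty {α : S} {x : ℕ} (hx : 1 ≤ x) (hk : 1 ≤ ar α)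
    (hnot : ¬(ar α = 1 ∧ x = 1)) {t u : GTree S ar} (ht : epsIdx t = {x})
    (hu : u ∈ quotT (symTree α) t) : False := by
  have h := quot_idx_eq hx ht hu
  have hcard := congrArg Multiset.card h
  rw [Multiset.card_add, card_epsIdx_symTree] at hcard
  simp only [Multiset.card_singleton] at hcard
  have hα1 : ar α = 1 := by omega
  have hzero : (({x} : Multiset ℕ) - epsIdx (symTree α : GTree S ar)) = 0 := by
    have : Multiset.card (({x} : Multiset ℕ) - epsIdx (symTree α : GTree S ar)) = 0 := by omega
    exact Multiset.card_eq_zero.mp this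
  rw [hzero, add_zero, epsIdx_symTree_one hα1] at h
  exact hnot ⟨hα1, by simpa using h⟩

@[simp] theorem epsIdx_eps (y : ℕ) : epsIdx (eps y : GTree S ar) = {y} := rfl
theorem epsIdx_node (f : S) (ts : Fin (ar f) → GTree S ar) :
    epsIdx (node f ts) = ∑ i, epsIdx (ts i) := rfl
@[simp] theorem subst_eps' (σ : ℕ → GTree S ar) (y : ℕ) : subst σ (eps y) = σ y := rfl
theorem subst_node (σ : ℕ → GTree S ar) (f : S) (ts : Fin (ar f) → GTree S ar) :
    subst σ (node f ts) = node f (fun i => subst σ (ts i)) := rfl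

theorem card_epsIdx_phi {α : S} (hα : ar α = 1) (u : GTree S ar) :
    Multiset.card (epsIdx (subst (phiF α) u)) = Multiset.card (epsIdx u) := by
  rw [epsIdx_phi, Multiset.card_bind]
  have h : ∀ j ∈ epsIdx u, (Multiset.card ∘ fun j =>
      if j = 1 then epsIdx (symTree α : GTree S ar) else ({j - 1} : Multiset ℕ)) j = 1 := by
    intro j _
    by_cases hj : j = 1 <;> simp [hj, epsIdx_symTree_one hα]
  rw [Multiset.map_congr rfl h, Multiset.map_const', Multiset.sum_replicate, smul_eq_mul, mul_one]

theorem child_le {f : S} (ss : Fin (ar f) → GTree S ar) (i : Fin (ar f)) :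
    epsIdx (ss i) ≤ epsIdx (node f ss) := by
  rw [epsIdx_node]
  exact Finset.single_le_sum (f := fun i => epsIdx (ss i)) (fun i _ => zero_le)
    (Finset.mem_univ i)

theorem sOne_of_epsIdx_zero {t : GTree S ar} (h : epsIdx t = 0) (y : ℕ) (a : GTree S ar) :
    sOne y a t = t := subst_of_epsIdx_zero h _

theorem others_zero {f : S} {ss : Fin (ar f) → GTree S ar} {x : ℕ} {i₀ : Fin (ar f)}
    (hle : epsIdx (node f ss) ≤ {x}) (h₀ : epsIdx (ss i₀) = {x}) :
    ∀ i, i ≠ i₀ → epsIdx (ss i) = 0 := by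
  have hsum : epsIdx (ss i₀) + ∑ i ∈ Finset.univ.erase i₀, epsIdx (ss i)
      = epsIdx (node f ss) := Finset.add_sum_erase _ _ (Finset.mem_univ i₀)
  rw [h₀] at hsum
  have h2 : ∑ i ∈ Finset.univ.erase i₀, epsIdx (ss i) = 0 := by
    have hle2 : ({x} : Multiset ℕ) + ∑ i ∈ Finset.univ.erase i₀, epsIdx (ss i)
        ≤ {x} + 0 := by rw [add_zero, hsum]; exact hle
    exact Multiset.le_zero.mp (le_of_add_le_add_left hle2)
  intro i hi
  exact (Finset.sum_eq_zero_iff).mp h2 i (Finset.mem_erase.mpr ⟨hi, Finset.mem_univ i⟩)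

theorem node_epsIdx_eq {f : S} {ss : Fin (ar f) → GTree S ar} {x : ℕ} {i₀ : Fin (ar f)}
    (h₀ : epsIdx (ss i₀) = {x}) (hz : ∀ i, i ≠ i₀ → epsIdx (ss i) = 0) :
    epsIdx (node f ss) = {x} := by
  rw [epsIdx_node, ← Finset.add_sum_erase _ _ (Finset.mem_univ i₀), h₀,
    Finset.sum_eq_zero (fun i hi => hz i (Finset.mem_erase.mp hi).1), add_zero]

theorem mem_epsIdx_node {f : S} {ss : Fin (ar f) → GTree S ar} {j : ℕ} :
    j ∈ epsIdx (node f ss) ↔ ∃ i, j ∈ epsIdx (ss i) := by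
  rw [epsIdx_node, Multiset.mem_sum]
  simp

/-- The splitting lemma in the case `ar α = 1` (which forces `x = 1`). -/
theorem split1 {α : S} (hα : ar α = 1) {r : GTree S ar} (hr : epsIdx r = {1}) :
    ∀ t u : GTree S ar, epsIdx t ≤ {1} → subst (phiF α) u = sOne 1 r t →
      1 ∈ epsIdx u →
      (epsIdx t = {1} ∧ ∃ ur, subst (phiF α) ur = r ∧ u = sOne 1 ur t) ∨ r = eps 1 := by
  intro t
  induction t with
  | eps y =>
      intro u hle hphi _
      have hy : y = 1 := by simpa using hle
      subst hy
      exact Or.inl ⟨rfl, u, by simpa [sOne] using hphi, by simp [sOne]⟩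
  | node f ss ih =>
      intro u hle hphi hmem
      have hphi' : subst (phiF α) u = node f (fun i => sOne 1 r (ss i)) := hphi
      cases u with
      | eps j =>
          have hj : j = 1 := ((by simpa using hmem : (1 : ℕ) = j)).symm
          subst hj
          have hphi'' : node α (fun i : Fin (ar α) => (eps (i.1 + 1) : GTree S ar))
              = node f (fun i => sOne 1 r (ss i)) := hphi'
          injection hphi'' with h1 h2
          subst h1
          have hch := congrFun (eq_of_heq h2)
          have har : 0 < ar α := by omega
          have hch0 := hch ⟨0, har⟩
          simp only at hch0
          set i0 : Fin (ar α) := ⟨0, har⟩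
          -- hch0 : eps 1 = sOne 1 r (ss i0)
          have hssle : epsIdx (ss i0) ≤ {1} := le_trans (child_le ss i0) hle
          rcases Multiset.le_singleton.mp hssle with hz | ho
          · rw [sOne_of_epsIdx_zero hz] at hch0
            rw [← hch0] at hz
            simp at hz
          · cases hss : ss i0 with
            | eps y =>
                rw [hss] at ho
                have hy : y = 1 := by simpa using ho
                subst hy
                rw [hss] at hch0
                simp only [sOne, subst_eps', if_pos rfl] at hch0
                exact Or.inr hch0.symm
            | node g cs =>
                rw [hss] at hch0
                rw [sOne, subst_node] at hch0
                exact absurd hch0 (fun h => by cases h)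
      | node g us =>
          rw [subst_node] at hphi'
          injection hphi' with h1 h2
          subst h1
          have hch := congrFun (eq_of_heq h2)
          -- epsIdx u = {1}
          have hcard : Multiset.card (epsIdx (node g us)) ≤ 1 := by
            rw [← card_epsIdx_phi hα, hphi]
            rw [sOne, epsIdx_subst]
            rcases Multiset.le_singleton.mp hle with hz | ho
            · rw [hz]; simp
            · rw [ho]; simp [hr]
          have hne : epsIdx (node g us) ≠ 0 := fun hz => by rw [hz] at hmem; simp at hmem
          have hcard1 : Multiset.card (epsIdx (node g us)) = 1 :=
            le_antisymm hcard (Multiset.card_pos.mpr hne)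
          obtain ⟨a, ha⟩ := Multiset.card_eq_one.mp hcard1
          have ha1 : a = 1 := by
            rw [ha] at hmem
            exact (Multiset.mem_singleton.mp hmem).symm
          have hu1 : epsIdx (node g us) = {1} := by rw [ha, ha1]
          obtain ⟨i₀, hi₀⟩ := mem_epsIdx_node.mp hmem
          have hchle : epsIdx (us i₀) ≤ {1} := le_trans (child_le us i₀) (le_of_eq hu1)
          have hui₀ : epsIdx (us i₀) = {1} := by
            rcases Multiset.le_singleton.mp hchle with hz | ho
            · rw [hz] at hi₀; simp at hi₀
            · exact ho
          have huz : ∀ i, i ≠ i₀ → epsIdx (us i) = 0 :=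
            others_zero (le_of_eq hu1) hui₀
          -- for i ≠ i₀  : us i = ss i and epsIdx (ss i) = 0
          have hothers : ∀ i, i ≠ i₀ → us i = ss i ∧ epsIdx (ss i) = 0 := by
            intro i hi
            have h1 : us i = sOne 1 r (ss i) := by
              rw [← hch i, subst_of_epsIdx_zero (huz i hi)]
            have h2 : epsIdx (sOne 1 r (ss i)) = 0 := by rw [← h1]; exact huz i hi
            have h3 : epsIdx (ss i) = 0 := by
              rcases Multiset.le_singleton.mp (le_trans (child_le ss i) hle) with hz | ho
              · exact hz
              · exfalso; rw [epsIdx_sOne ho, hr] at h2; simp at h2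
            refine ⟨?_, h3⟩
            rw [h1, sOne_of_epsIdx_zero h3]
          -- epsIdx (ss i₀) = {1}
          have hss₀ : epsIdx (ss i₀) = {1} := by
            rcases Multiset.le_singleton.mp (le_trans (child_le ss i₀) hle) with hz | ho
            · exfalso
              have := congrArg epsIdx (hch i₀)
              rw [epsIdx_phi, hui₀, sOne_of_epsIdx_zero hz] at this
              rw [hz] at this
              simp [epsIdx_symTree_one hα] at this
            · exact ho
          rcases ih i₀ (us i₀) (le_of_eq hss₀) (hch i₀) (by rw [hui₀]; simp) with
            ⟨_, ur, hur, hu0⟩ | hre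
          · refine Or.inl ⟨node_epsIdx_eq hss₀ (fun i hi => (hothers i hi).2), ur, hur, ?_⟩
            show node g us = node g (fun i => sOne 1 ur (ss i))
            congr 1
            funext i
            by_cases hi : i = i₀
            · subst hi; exact hu0
            · rw [sOne_of_epsIdx_zero (hothers i hi).2, (hothers i hi).1]
          · exact Or.inr hre

theorem count_epsIdx_node {f : S} (us : Fin (ar f) → GTree S ar) (a : ℕ) :
    (epsIdx (node f us)).count a = ∑ i, (epsIdx (us i)).count a := by
  rw [epsIdx_node]
  have h := map_sum (Multiset.countAddMonoidHom a) (fun i => epsIdx (us i)) Finset.univ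
  simpa only [Multiset.coe_countAddMonoidHom] using h

theorem zero_not_mem_le_singleton {m : Multiset ℕ} {x : ℕ} (h : m ≤ {x}) (hx : 1 ≤ x) :
    0 ∉ m := fun hm => by
  have := Multiset.mem_of_le h hm
  simp at this
  omega

theorem zero_not_mem_sOne {x : ℕ} (hx : 1 ≤ x) {r t : GTree S ar} (hr : epsIdx r = {x})
    (ht : epsIdx t ≤ {x}) : 0 ∉ epsIdx (sOne x r t) := by
  rcases Multiset.le_singleton.mp ht with hz | ho
  · rw [sOne_of_epsIdx_zero hz, hz]
    simp
  · rw [epsIdx_sOne ho, hr]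
    intro hm
    simp at hm
    omega

theorem zero_not_mem_of_phi {α : S} {w : GTree S ar}
    (h : 0 ∉ epsIdx (subst (phiF α) w)) : 0 ∉ epsIdx w := by
  intro hm
  apply h
  rw [epsIdx_phi]
  exact Multiset.mem_bind.mpr ⟨0, hm, by norm_num⟩

/-- The splitting lemma in the case `ar α = 0`. -/
theorem split0 {α : S} (hα : ar α = 0) {x : ℕ} (hx : 1 ≤ x) {r : GTree S ar}
    (hr : epsIdx r = {x}) :
    ∀ t u : GTree S ar, epsIdx t ≤ {x} → subst (phiF α) u = sOne x r t →
      (epsIdx u).count 1 = 1 →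
      (epsIdx t = {x} ∧ ∃ ur, subst (phiF α) ur = r ∧ u = sOne x ur t) ∨
      (∃ ut, subst (phiF α) ut = t ∧ u = sOne (x + 1) (inc 1 r) ut) := by
  intro t
  induction t with
  | eps y =>
      intro u hle hphi _
      have hy : y = x := by simpa using hle
      subst hy
      exact Or.inl ⟨rfl, u, by simpa [sOne] using hphi, by simp [sOne]⟩
  | node f ss ih =>
      intro u hle hphi hcnt
      have hphi' : subst (phiF α) u = node f (fun i => sOne x r (ss i)) := hphi
      cases u with
      | eps j =>
          have hj : j = 1 := by
            by_contra hj
            rw [epsIdx_eps, Multiset.count_singleton,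
              if_neg (fun hh : (1:ℕ) = j => hj hh.symm)] at hcnt
            omega
          subst hj
          have hphi'' : node α (fun i : Fin (ar α) => (eps (i.1 + 1) : GTree S ar))
              = node f (fun i => sOne x r (ss i)) := hphi'
          injection hphi'' with h1 h2
          subst h1
          refine Or.inr ⟨eps 1, ?_, by simp [sOne, show (1:ℕ) ≠ x + 1 by omega, show x ≠ 0 by omega]⟩
          show (symTree α : GTree S ar) = node α ss
          unfold symTree
          congr 1
          funext i
          exact absurd i.isLt (by omega)
      | node g us =>
          rw [subst_node] at hphi'
          injection hphi' with h1 h2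
          subst h1
          have hch := congrFun (eq_of_heq h2)
          rw [count_epsIdx_node] at hcnt
          have hex : ∃ i₀, (epsIdx (us i₀)).count 1 ≠ 0 := by
            by_contra h
            push_neg at h
            rw [Finset.sum_eq_zero (fun i _ => h i)] at hcnt
            omega
          obtain ⟨i₀, hi₀⟩ := hex
          have hsplit : (epsIdx (us i₀)).count 1 = 1 ∧
              ∀ i, i ≠ i₀ → (epsIdx (us i)).count 1 = 0 := by
            have herase : (epsIdx (us i₀)).count 1 +
                ∑ i ∈ Finset.univ.erase i₀, (epsIdx (us i)).count 1 = 1 :=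
              (Finset.add_sum_erase Finset.univ
                (fun i => (epsIdx (us i)).count 1) (Finset.mem_univ i₀)).trans hcnt
            have hz : ∑ i ∈ Finset.univ.erase i₀, (epsIdx (us i)).count 1 = 0 := by omega
            exact ⟨by omega, fun i hi => (Finset.sum_eq_zero_iff).mp hz i
              (Finset.mem_erase.mpr ⟨hi, Finset.mem_univ i⟩)⟩
          have hnm : ∀ i, i ≠ i₀ → 1 ∉ epsIdx (us i) :=
            fun i hi => Multiset.count_eq_zero.mp (hsplit.2 i hi)
          by_cases hss₀ : epsIdx (ss i₀) = 0
          · -- the marker lives above the hole: case (B), no induction needed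
            have hphich : subst (phiF α) (us i₀) = ss i₀ := by
              rw [hch i₀, sOne_of_epsIdx_zero hss₀]
            have hui : ∀ i, i ≠ i₀ → us i = inc 1 (sOne x r (ss i)) := by
              intro i hi
              refine eq_inc_of_phi (hch i) (hnm i hi) ?_
              refine zero_not_mem_of_phi (α := α) ?_
              rw [hch i]
              exact zero_not_mem_sOne hx hr (le_trans (child_le ss i) hle)
            refine Or.inr ⟨node g (fun i => if i = i₀ then us i₀ else inc 1 (ss i)), ?_, ?_⟩
            · rw [subst_node]
              congr 1
              funext i
              by_cases hi : i = i₀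
              · subst hi; simpa using hphich
              · simp only [if_neg hi]
                exact phi_inc (zero_not_mem_le_singleton (le_trans (child_le ss i) hle) hx)
            · show node g us = node g (fun i => sOne (x+1) (inc 1 r)
                (if i = i₀ then us i₀ else inc 1 (ss i)))
              congr 1
              funext i
              by_cases hi : i = i₀
              · subst hi
                simp only [if_pos rfl]
                refine (sOne_of_not_mem ?_ _).symm
                intro hmem
                have := phi_all_one hα (by rw [hphich]; exact hss₀) _ hmem
                omega
              · simp only [if_neg hi]
                rw [← inc_sOne, ← hui i hi]
          · have hss₀' : epsIdx (ss i₀) = {x} := by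
              rcases Multiset.le_singleton.mp (le_trans (child_le ss i₀) hle) with hz | ho
              · exact absurd hz hss₀
              · exact ho
            have hsz : ∀ i, i ≠ i₀ → epsIdx (ss i) = 0 := others_zero hle hss₀'
            have husz : ∀ i, i ≠ i₀ → us i = ss i := by
              intro i hi
              have h1 : subst (phiF α) (us i) = ss i := by
                rw [hch i, sOne_of_epsIdx_zero (hsz i hi)]
              have h2 : epsIdx (us i) = 0 := by
                apply epsIdx_eq_zero_of_all_one _ (hnm i hi)
                exact phi_all_one hα (by rw [h1]; exact hsz i hi)
              exact eq_of_phi_of_epsIdx_zero h1 h2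
            rcases ih i₀ (us i₀) (le_of_eq hss₀') (hch i₀) hsplit.1 with
              ⟨_, ur, hur, hu₀⟩ | ⟨ut', hut', hu₀⟩
            · refine Or.inl ⟨node_epsIdx_eq hss₀' hsz, ur, hur, ?_⟩
              show node g us = node g (fun i => sOne x ur (ss i))
              congr 1
              funext i
              by_cases hi : i = i₀
              · subst hi; exact hu₀
              · rw [sOne_of_epsIdx_zero (hsz i hi), husz i hi]
            · refine Or.inr ⟨node g (fun i => if i = i₀ then ut' else ss i), ?_, ?_⟩
              · rw [subst_node]
                congr 1
                funext i
                by_cases hi : i = i₀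
                · subst hi; simpa using hut'
                · simp only [if_neg hi]
                  exact subst_of_epsIdx_zero (hsz i hi) _
              · show node g us = node g (fun i => sOne (x+1) (inc 1 r)
                  (if i = i₀ then ut' else ss i))
                congr 1
                funext i
                by_cases hi : i = i₀
                · subst hi; simpa using hu₀
                · simp only [if_neg hi]
                  rw [sOne_of_epsIdx_zero (hsz i hi), husz i hi]

theorem sOne_sOne (x : ℕ) (b r t : GTree S ar) :
    sOne x b (sOne x r t) = sOne x (sOne x b r) t := by
  unfold sOne
  rw [subst_subst]
  apply subst_congr
  intro j _
  by_cases hj : j = x <;> simp [hj]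

theorem subst_sOne_single {x : ℕ} {t : GTree S ar} (ht : epsIdx t = {x})
    (σ : ℕ → GTree S ar) (a : GTree S ar) :
    subst σ (sOne x a t) = sOne x (subst σ a) t := by
  unfold sOne
  rw [subst_subst]
  apply subst_congr
  intro j hj
  rw [ht, Multiset.mem_singleton] at hj
  subst hj
  simp

theorem epsIdx_sOne_singleton_same {y : ℕ} {b : GTree S ar} (hb : epsIdx b = {y})
    (t : GTree S ar) : epsIdx (sOne y b t) = epsIdx t := by
  unfold sOne
  rw [epsIdx_subst]
  have h : ∀ j ∈ epsIdx t, epsIdx (if j = y then b else eps j) = ({j} : Multiset ℕ) := by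
    intro j _
    by_cases hj : j = y <;> simp [hj, hb]
  rw [Multiset.bind_congr h, Multiset.bind_singleton, Multiset.map_id']

theorem mem_quotL_iff {d : GTree S ar} {L : Set (GTree S ar)} {u : GTree S ar} :
    u ∈ quotL d L ↔ ∃ t ∈ L, u ∈ quotT d t := by
  unfold quotL
  simp

theorem mem_pcompL_iff {L L' : Set (GTree S ar)} {u : GTree S ar} :
    u ∈ pcompL L L' ↔ ∃ t ∈ L, u ∈ pcomp t L' := by
  unfold pcompL
  simp

theorem quotT_simp0 {α : S} (hα : ar α = 0) {x : ℕ} {T u : GTree S ar}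
    (h : epsIdx T = {x}) :
    u ∈ quotT (symTree α) T ↔
      (epsIdx u = {1, x + 1} ∧ subst (phiF α) u = T) := by
  unfold quotT
  rw [Set.mem_setOf_eq, h, epsIdx_symTree_zero hα, tsub_zero, Multiset.map_singleton]
  constructor
  · rintro ⟨h1, h2⟩; exact ⟨h1, h2⟩
  · rintro ⟨h1, h2⟩; exact ⟨h1, h2⟩

theorem quotT_simp1 {α : S} (hα : ar α = 1) {T u : GTree S ar}
    (h : epsIdx T = {1}) :
    u ∈ quotT (symTree α) T ↔
      (epsIdx u = {1} ∧ subst (phiF α) u = T) := by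
  unfold quotT
  rw [Set.mem_setOf_eq, h, epsIdx_symTree_one hα, tsub_self, Multiset.map_zero]
  constructor
  · rintro ⟨h1, h2⟩; exact ⟨h1, h2⟩
  · rintro ⟨h1, h2⟩; exact ⟨h1, h2⟩

theorem iterC_mono {x : ℕ} {L : Set (GTree S ar)} {n m : ℕ} (h : n ≤ m) :
    iterC x L n ⊆ iterC x L m := by
  induction m with
  | zero => rw [Nat.le_zero.mp h]
  | succ m ih =>
      rcases Nat.le_succ_iff.mp h with h' | h'
      · exact fun t ht => Or.inl (ih h' ht)
      · rw [h']

theorem L_sOne_closC {x : ℕ} {L : Set (GTree S ar)} (hL : ∀ t ∈ L, epsIdx t = {x})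
    {s : GTree S ar} (hs : s ∈ L) {w : GTree S ar} (hw : w ∈ closC x L) :
    sOne x w s ∈ closC x L := by
  rcases Set.mem_iUnion.mp hw with ⟨m, hm⟩
  clear hw
  induction m generalizing w with
  | zero =>
      have hw0 : w = eps x := hm
      subst hw0
      rw [sOne_eps]
      refine Set.mem_iUnion.mpr ⟨1, Or.inr ?_⟩
      refine Set.mem_iUnion₂.mpr ⟨eps x, rfl, ?_⟩
      refine (mem_pcomp_iff (show epsIdx (eps x : GTree S ar) = {x} from rfl)).mpr ⟨s, hs, ?_⟩
      simp [sOne]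
  | succ m ih =>
      rcases hm with hm | hm
      · exact ih hm
      · rcases Set.mem_iUnion₂.mp hm with ⟨t', ht', hw'⟩
        rcases (mem_pcomp_iff (epsIdx_of_mem_iterC hL m t' ht')).mp hw' with ⟨v, hv, rfl⟩
        rw [← sOne_sOne]
        exact sOne_mem_closC hL (ih ht') hv

theorem closC_sOne_closC {x : ℕ} {L : Set (GTree S ar)} (hL : ∀ t ∈ L, epsIdx t = {x})
    {a : GTree S ar} (ha : a ∈ closC x L) {b : GTree S ar} (hb : b ∈ closC x L) :
    sOne x b a ∈ closC x L := by
  rcases Set.mem_iUnion.mp ha with ⟨n, hn⟩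
  suffices h : ∀ n, ∀ b ∈ closC x L, ∀ a ∈ iterC x L n, sOne x b a ∈ closC x L from
    h n b hb a hn
  clear hn hb
  intro n
  induction n with
  | zero =>
      intro b hb a ha
      have h0 : a = eps x := ha
      subst h0
      simpa [sOne] using hb
  | succ n ih =>
      intro b hb a ha
      rcases ha with hn | hn
      · exact ih b hb a hn
      · rcases Set.mem_iUnion₂.mp hn with ⟨t', ht', ha'⟩
        rcases (mem_pcomp_iff (epsIdx_of_mem_iterC hL n t' ht')).mp ha' with ⟨v, hv, rfl⟩
        rw [sOne_sOne]
        exact ih (sOne x b v) (L_sOne_closC hL hv hb) t' ht' 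

theorem compo_pair_eps1 {x : ℕ} (hx : 1 ≤ x) {v : GTree S ar}
    (hv : epsIdx v = {1, x + 1}) (b : GTree S ar) :
    compo v [eps 1, b] = sOne (x + 1) b v := by
  rw [compo_pair hx hv]
  unfold sOne
  apply subst_congr
  intro j hj
  rw [hv] at hj
  rcases (by simpa using hj : j = 1 ∨ j = x + 1) with rfl | rfl
  · simp [show (1:ℕ) ≠ x + 1 by omega, show x ≠ 0 by omega]
  · simp [show x + 1 ≠ 1 by omega, show x ≠ 0 by omega]

theorem phi_big {α : S} (hα : ar α = 0) {x : ℕ} (hx : 1 ≤ x) {t u' s w : GTree S ar}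
    (ht : epsIdx t = {x}) (hu' : epsIdx u' = {1, x + 1}) (hs : subst (phiF α) u' = s)
    (hw : epsIdx w = {x}) :
    subst (phiF α) (sOne (x + 1) (inc 1 w) (sOne x u' t)) = sOne x (sOne x w s) t := by
  have hV : epsIdx (sOne x u' t) = {1, x + 1} := by rw [epsIdx_sOne ht, hu']
  have step1 : subst (phiF α) (sOne (x + 1) (inc 1 w) (sOne x u' t)) =
      subst (fun j => if j = 1 then symTree α else if j = x + 1 then w else eps j)
        (sOne x u' t) := by
    show subst (phiF α) (subst _ (sOne x u' t)) = _
    rw [subst_subst]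
    apply subst_congr
    intro j hj
    rw [hV] at hj
    rcases (by simpa using hj : j = 1 ∨ j = x + 1) with rfl | rfl
    · rw [if_neg (by omega), if_pos rfl]
      show phiF α 1 = symTree α
      simp [phiF]
    · rw [if_pos rfl, if_neg (by omega), if_pos rfl]
      exact phi_inc (by rw [hw]; intro hm; simp at hm; omega)
  rw [step1, subst_sOne_single ht]
  congr 1
  -- subst ψ u' = sOne x w s
  rw [← hs]
  have step2 : sOne x w (subst (phiF α) u') =
      subst (fun j => sOne x w (phiF α j)) u' := by
    unfold sOne
    rw [subst_subst]
  rw [step2]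
  apply subst_congr
  intro j hj
  rw [hu'] at hj
  rcases (by simpa using hj : j = 1 ∨ j = x + 1) with rfl | rfl
  · rw [if_pos rfl]
    show _ = sOne x w (phiF α 1)
    rw [show phiF α 1 = (symTree α : GTree S ar) from rfl,
      sOne_of_epsIdx_zero (epsIdx_symTree_zero hα)]
  · rw [if_neg (by omega), if_pos rfl]
    show _ = sOne x w (phiF α (x + 1))
    rw [show phiF α (x + 1) = (eps (x + 1 - 1) : GTree S ar) from by
      rw [phiF, if_neg (by omega)]]
    simp [sOne]

theorem mem_RHS_iff {α : S} (hα : ar α = 0) {x : ℕ} (hx : 1 ≤ x) {L : Set (GTree S ar)}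
    (hL : ∀ t ∈ L, epsIdx t = {x}) {u : GTree S ar} :
    u ∈ compoL (pcompL (closC x L) (quotL (symTree α) L))
        [({eps 1} : Set (GTree S ar)), incL 1 (closC x L)] ↔
      ∃ t ∈ closC x L, ∃ s ∈ L, ∃ u' ∈ quotT (symTree α) s, ∃ w ∈ closC x L,
        u = sOne (x + 1) (inc 1 w) (sOne x u' t) := by
  have hvIdx : ∀ t ∈ closC x L, ∀ s ∈ L, ∀ u' ∈ quotT (symTree α) s,
      epsIdx (sOne x u' t) = {1, x + 1} := by
    intro t ht s hs u' hq
    rw [epsIdx_sOne (epsIdx_of_mem_closC hL ht)]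
    exact ((quotT_simp0 hα (hL s hs)).mp hq).1
  constructor
  · rintro ⟨v, hv, ts, hts, rfl⟩
    obtain ⟨a, ts1, ha, hts1, rfl⟩ := List.forall₂_cons_right_iff.mp hts
    obtain ⟨b, ts2, hb, hts2, rfl⟩ := List.forall₂_cons_right_iff.mp hts1
    rw [List.forall₂_nil_right_iff.mp hts2]
    obtain rfl : a = eps 1 := ha
    obtain ⟨w, hw, rfl⟩ := hb
    obtain ⟨t, ht, hv'⟩ := mem_pcompL_iff.mp hv
    obtain ⟨u', hq, rfl⟩ := (mem_pcomp_iff (epsIdx_of_mem_closC hL ht)).mp hv'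
    obtain ⟨s, hs, hq'⟩ := mem_quotL_iff.mp hq
    refine ⟨t, ht, s, hs, u', hq', w, hw, ?_⟩
    rw [compo_pair_eps1 hx (hvIdx t ht s hs u' hq')]
  · rintro ⟨t, ht, s, hs, u', hq, w, hw, rfl⟩
    refine ⟨sOne x u' t, ?_, [eps 1, inc 1 w], ?_, ?_⟩
    · exact mem_pcompL_iff.mpr ⟨t, ht, (mem_pcomp_iff (epsIdx_of_mem_closC hL ht)).mpr
        ⟨u', mem_quotL_iff.mpr ⟨s, hs, hq⟩, rfl⟩⟩
    · exact List.Forall₂.cons rfl (List.Forall₂.cons ⟨w, hw, rfl⟩ List.Forall₂.nil)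
    · rw [compo_pair_eps1 hx (hvIdx t ht s hs u' hq)]

theorem main0_aux {α : S} (hα : ar α = 0) {x : ℕ} (hx : 1 ≤ x) {L : Set (GTree S ar)}
    (hL : ∀ t ∈ L, epsIdx t = {x}) :
    ∀ n, ∀ T ∈ iterC x L n, ∀ u : GTree S ar, epsIdx u = {1, x + 1} →
      subst (phiF α) u = T →
      u ∈ compoL (pcompL (closC x L) (quotL (symTree α) L))
        [({eps 1} : Set (GTree S ar)), incL 1 (closC x L)] := by
  intro n
  induction n with
  | zero =>
      intro T hT u hu hphi
      have hT0 : T = eps x := hT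
      subst hT0
      exfalso
      cases u with
      | eps j =>
          have hc := congrArg Multiset.card hu
          simp at hc
      | node g us =>
          exact absurd (show (node g (fun i => subst (phiF α) (us i)) :
            GTree S ar) = eps x from hphi) (fun h => by cases h)
  | succ n ih =>
      intro T hT u hu hphi
      rcases hT with hT | hT
      · exact ih T hT u hu hphi
      · rcases Set.mem_iUnion₂.mp hT with ⟨t, htn, hT'⟩
        have htIdx := epsIdx_of_mem_iterC hL n t htn
        rcases (mem_pcomp_iff htIdx).mp hT' with ⟨r, hrL, rfl⟩
        have hcnt : (epsIdx u).count 1 = 1 := by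
          rw [hu]
          simp [Multiset.count_cons, Multiset.count_singleton,
            show ¬(1:ℕ) = x + 1 by omega, show x ≠ 0 by omega]
        rcases split0 hα hx (hL r hrL) t u (le_of_eq htIdx) hphi hcnt with
          ⟨_, ur, hur, rfl⟩ | ⟨ut, hut, rfl⟩
        · have hurIdx : epsIdx ur = {1, x + 1} := by
            rw [epsIdx_sOne htIdx] at hu; exact hu
          refine (mem_RHS_iff hα hx hL).mpr ⟨t, iterC_subset_closC x L n htn, r, hrL,
            ur, (quotT_simp0 hα (hL r hrL)).mpr ⟨hurIdx, hur⟩, eps x, eps_mem_closC x L, ?_⟩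
          show sOne x ur t = sOne (x + 1) (inc 1 (eps x)) (sOne x ur t)
          rw [show (inc 1 (eps x) : GTree S ar) = eps (x + 1) from rfl, sOne_eps]
        · have hutIdx : epsIdx ut = {1, x + 1} := by
            rw [epsIdx_sOne_singleton_same
              (by simp [epsIdx_inc, hL r hrL] : epsIdx (inc 1 r) = {x + 1}) ut] at hu
            exact hu
          obtain ⟨t', ht', s', hs', u'', hq'', w, hw, hueq⟩ :=
            (mem_RHS_iff hα hx hL).mp (ih t htn ut hutIdx hut)
          refine (mem_RHS_iff hα hx hL).mpr ⟨t', ht', s', hs', u'', hq'', sOne x r w,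
            sOne_mem_closC hL hw hrL, ?_⟩
          rw [hueq, sOne_sOne, ← inc_sOne]

theorem main1_aux {α : S} (hα : ar α = 1) {L : Set (GTree S ar)}
    (hL : ∀ t ∈ L, epsIdx t = {1}) :
    ∀ n, ∀ T ∈ iterC 1 L n, ∀ u : GTree S ar, epsIdx u = {1} →
      subst (phiF α) u = T →
      u ∈ pcompL (closC 1 L) (quotL (symTree α) L) := by
  intro n
  induction n with
  | zero =>
      intro T hT u hu hphi
      have hT0 : T = eps 1 := hT
      subst hT0
      exfalso
      cases u with
      | eps j =>
          have hj : j = 1 := by simpa using hu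
          subst hj
          exact absurd (show (node α (fun i : Fin (ar α) =>
            (eps (i.1 + 1) : GTree S ar)) : GTree S ar) = eps 1 from hphi) (fun h => by cases h)
      | node g us =>
          exact absurd (show (node g (fun i => subst (phiF α) (us i)) :
            GTree S ar) = eps 1 from hphi) (fun h => by cases h)
  | succ n ih =>
      intro T hT u hu hphi
      rcases hT with hT | hT
      · exact ih T hT u hu hphi
      · rcases Set.mem_iUnion₂.mp hT with ⟨t, htn, hT'⟩
        have htIdx := epsIdx_of_mem_iterC hL n t htn
        rcases (mem_pcomp_iff htIdx).mp hT' with ⟨r, hrL, rfl⟩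
        rcases split1 hα (hL r hrL) t u (le_of_eq htIdx) hphi (by rw [hu]; simp) with
          ⟨_, ur, hur, rfl⟩ | hre
        · have hurIdx : epsIdx ur = {1} := by rw [epsIdx_sOne htIdx] at hu; exact hu
          exact mem_pcompL_iff.mpr ⟨t, iterC_subset_closC 1 L n htn,
            (mem_pcomp_iff htIdx).mpr ⟨ur, mem_quotL_iff.mpr ⟨r, hrL,
              (quotT_simp1 hα (hL r hrL)).mpr ⟨hurIdx, hur⟩⟩, rfl⟩⟩
        · subst hre
          rw [sOne_eps] at hphi
          exact ih t htn u hu hphi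

end GTree


open GTree in
/-- quotient of the composition closure `L^⊛` of a 1-homogeneous language. -/
theorem quotient_closC {S : Type} {ar : S → ℕ} (x : ℕ) (hx : 1 ≤ x)
    (L : Set (GTree S ar)) (hL : ∀ t ∈ L, epsIdx t = {x}) (α : S) :
    (ar α = 0 →
      quotL (symTree α) (closC x L) =
        compoL (pcompL (closC x L) (quotL (symTree α) L))
          [({eps 1} : Set (GTree S ar)), incL 1 (closC x L)]) ∧
    (1 ≤ ar α →
      quotL (symTree α) (closC x L) = pcompL (closC x L) (quotL (symTree α) L)) := by
  constructor
  · intro hα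
    ext u
    constructor
    · intro hmem
      obtain ⟨T, hT, hq⟩ := mem_quotL_iff.mp hmem
      obtain ⟨hu1, hu2⟩ := (quotT_simp0 hα (epsIdx_of_mem_closC hL hT)).mp hq
      obtain ⟨n, hn⟩ := Set.mem_iUnion.mp hT
      exact main0_aux hα hx hL n T hn u hu1 hu2
    · intro hmem
      obtain ⟨t, ht, s, hs, u', hq, w, hw, rfl⟩ := (mem_RHS_iff hα hx hL).mp hmem
      obtain ⟨hq1, hq2⟩ := (quotT_simp0 hα (hL s hs)).mp hq
      have htIdx := epsIdx_of_mem_closC hL ht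
      have hwIdx := epsIdx_of_mem_closC hL hw
      refine mem_quotL_iff.mpr ⟨sOne x (sOne x w s) t,
        closC_sOne_closC hL ht (L_sOne_closC hL hs hw), ?_⟩
      refine (quotT_simp0 hα (?_ : epsIdx (sOne x (sOne x w s) t) = {x})).mpr ⟨?_, ?_⟩
      · rw [epsIdx_sOne htIdx, epsIdx_sOne (hL s hs), hwIdx]
      · rw [epsIdx_sOne_singleton_same
          (by simp [epsIdx_inc, hwIdx] : epsIdx (inc 1 w) = {x + 1}) _,
          epsIdx_sOne htIdx]
        exact hq1
      · exact phi_big hα hx htIdx hq1 hq2 hwIdx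
  · intro hk
    by_cases hc : ar α = 1 ∧ x = 1
    · obtain ⟨hα1, hx1⟩ := hc
      subst hx1
      ext u
      constructor
      · intro hmem
        obtain ⟨T, hT, hq⟩ := mem_quotL_iff.mp hmem
        obtain ⟨hu1, hu2⟩ := (quotT_simp1 hα1 (epsIdx_of_mem_closC hL hT)).mp hq
        obtain ⟨n, hn⟩ := Set.mem_iUnion.mp hT
        exact main1_aux hα1 hL n T hn u hu1 hu2
      · intro hmem
        obtain ⟨t, ht, hp⟩ := mem_pcompL_iff.mp hmem
        have htIdx := epsIdx_of_mem_closC hL ht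
        obtain ⟨u', hq, rfl⟩ := (mem_pcomp_iff htIdx).mp hp
        obtain ⟨s, hs, hq'⟩ := mem_quotL_iff.mp hq
        obtain ⟨h1, h2⟩ := (quotT_simp1 hα1 (hL s hs)).mp hq'
        refine mem_quotL_iff.mpr ⟨sOne 1 s t, sOne_mem_closC hL ht hs, ?_⟩
        refine (quotT_simp1 hα1 (by rw [epsIdx_sOne htIdx, hL s hs])).mpr ⟨?_, ?_⟩
        · rw [epsIdx_sOne htIdx]
          exact h1
        · rw [subst_sOne_single htIdx, h2]
    · ext u
      constructor
      · intro hmem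
        obtain ⟨T, hT, hq⟩ := mem_quotL_iff.mp hmem
        exact (quotT_eps_empty hx hk hc (epsIdx_of_mem_closC hL hT) hq).elim
      · intro hmem
        obtain ⟨t, ht, hp⟩ := mem_pcompL_iff.mp hmem
        obtain ⟨u', hq, rfl⟩ := (mem_pcomp_iff (epsIdx_of_mem_closC hL ht)).mp hp
        obtain ⟨s, hs, hq'⟩ := mem_quotL_iff.mp hq
        exact (quotT_eps_empty hx hk hc (hL s hs) hq').elim
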